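/- For every α with 0 < α < 1, the quantity 1/2 + (1−α)/(4√2) + √((1−α)² + 4α²)/(4√2) is strictly greater than the maximum of the three numbers 1/2 + (1−α)/(2√2), 1/2 + (1/8)√(4+(1−α)²), and 1/2 + (1/4)√(1+α²); moreover at α = 0 and α = 1 the two quantities are equal. (That is, the optimal unsharp-measurement value P̄_succ^POVM(α) strictly exceeds the projective bound P̄_succ^PVM(α) for all α strictly between 0 and 1.) -/

import Mathlib

noncomputable section

/-- The optimal average success probability with unsharp measurements (Proposition 2). -/
def povmBound (α : ℝ) : ℝ :=
  1 / 2 + (1 - α) / (4 * Real.sqrt 2) + Real.sqrt ((1 - α) ^ 2 + 4 * α ^ 2) / (4 * Real.sqrt 2)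

/-- The bound for projective strategies (Proposition 1): the maximum of the bounds of
the unitary, mixed, and measure-and-prepare strategies. -/
def pvmBound (α : ℝ) : ℝ :=
  max (max (1 / 2 + (1 - α) / (2 * Real.sqrt 2)) (1 / 2 + Real.sqrt (4 + (1 - α) ^ 2) / 8))
    (1 / 2 + Real.sqrt (1 + α ^ 2) / 4)

/-!
Write `s = 1 - α` and `b = √(s² + 4α²)`, the length of `(s, 2α)`, so that
`povmBound α = 1/2 + (s + b)√2/8`. Each projective bound has the form `1/2 + K/8`, and after
squaring, the comparison of `K` with `(s + b)√2` reduces, via `s + α = 1`, to a lower bound on `b`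
by Cauchy–Schwarz: `s ≤ b` (unitary), `2α ≤ b` (measure-and-prepare) and `3s + 8α ≤ 5b` (mixed).
The first two are strict exactly when `α ≠ 0`, resp. `α ≠ 1`, and their equality cases give the
endpoint values; the mixed comparison is strict for every `α ≤ 1`.
-/

open Real

lemma div_mul_sqrt_two (x c : ℝ) : x / (c * √2) = x * √2 / (2 * c) := by
  rcases eq_or_ne c 0 with rfl | hc
  · simp
  · field_simp
    rw [sq_sqrt zero_le_two]

lemma one_sub_le_sqrt (α : ℝ) : 1 - α ≤ √((1 - α) ^ 2 + 4 * α ^ 2) :=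
  le_sqrt_of_sq_le (le_add_of_nonneg_right (by positivity))

lemma one_sub_lt_sqrt {α : ℝ} (hα : α ≠ 0) : 1 - α < √((1 - α) ^ 2 + 4 * α ^ 2) :=
  lt_sqrt_of_sq_lt (lt_add_of_pos_right _ (by positivity))

lemma two_mul_le_sqrt (α : ℝ) : 2 * α ≤ √((1 - α) ^ 2 + 4 * α ^ 2) :=
  le_sqrt_of_sq_le (by nlinarith [sq_nonneg (1 - α)])

lemma two_mul_lt_sqrt {α : ℝ} (hα : α ≠ 1) : 2 * α < √((1 - α) ^ 2 + 4 * α ^ 2) :=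
  lt_sqrt_of_sq_lt (by nlinarith [sq_pos_of_ne_zero (sub_ne_zero.2 hα.symm)])

lemma three_add_five_mul_le_sqrt (α : ℝ) : 3 + 5 * α ≤ 5 * √((1 - α) ^ 2 + 4 * α ^ 2) := by
  have h := le_sqrt_of_sq_le (x := (3 + 5 * α) / 5) (y := (1 - α) ^ 2 + 4 * α ^ 2)
    (by nlinarith [sq_nonneg (4 * (1 - α) - 6 * α)])
  linarith

lemma one_sub_add_sqrt_pos (α : ℝ) : 0 < 1 - α + √((1 - α) ^ 2 + 4 * α ^ 2) := by
  linarith [three_add_five_mul_le_sqrt α]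

lemma povmBound_eq (α : ℝ) :
    povmBound α = 1 / 2 + (1 - α + √((1 - α) ^ 2 + 4 * α ^ 2)) * √2 / 8 := by
  unfold povmBound
  rw [div_mul_sqrt_two, div_mul_sqrt_two]
  ring

lemma unitary_le_povmBound (α : ℝ) : 1 / 2 + (1 - α) / (2 * √2) ≤ povmBound α := by
  rw [povmBound_eq, div_mul_sqrt_two]
  nlinarith [mul_le_mul_of_nonneg_right (one_sub_le_sqrt α) (sqrt_nonneg 2)]

lemma unitary_lt_povmBound {α : ℝ} (hα : α ≠ 0) :
    1 / 2 + (1 - α) / (2 * √2) < povmBound α := by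
  rw [povmBound_eq, div_mul_sqrt_two]
  nlinarith [mul_lt_mul_of_pos_right (one_sub_lt_sqrt hα) (sqrt_pos.2 zero_lt_two)]

lemma mixed_lt_povmBound {α : ℝ} (h1 : α ≤ 1) :
    1 / 2 + √(4 + (1 - α) ^ 2) / 8 < povmBound α := by
  set b := √((1 - α) ^ 2 + 4 * α ^ 2)
  have hb : b ^ 2 = (1 - α) ^ 2 + 4 * α ^ 2 := sq_sqrt (by positivity)
  have key : √(4 + (1 - α) ^ 2) < (1 - α + b) * √2 := by
    rw [sqrt_lt' (mul_pos (one_sub_add_sqrt_pos α) (sqrt_pos.2 zero_lt_two)), mul_pow,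
      sq_sqrt zero_le_two]
    nlinarith [mul_nonneg (sub_nonneg.2 h1) (sub_nonneg.2 (three_add_five_mul_le_sqrt α))]
  rw [povmBound_eq]
  linarith

lemma measurePrepare_le_povmBound {α : ℝ} (h1 : α ≤ 1) :
    1 / 2 + √(1 + α ^ 2) / 4 ≤ povmBound α := by
  set b := √((1 - α) ^ 2 + 4 * α ^ 2)
  have hb : b ^ 2 = (1 - α) ^ 2 + 4 * α ^ 2 := sq_sqrt (by positivity)
  have key : 2 * √(1 + α ^ 2) ≤ (1 - α + b) * √2 := by
    rw [← sq_le_sq₀ (by positivity) (mul_nonneg (one_sub_add_sqrt_pos α).le (sqrt_nonneg 2)),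
      mul_pow, mul_pow, sq_sqrt (by positivity), sq_sqrt zero_le_two]
    nlinarith [mul_le_mul_of_nonneg_left (two_mul_le_sqrt α) (sub_nonneg.2 h1)]
  rw [povmBound_eq]
  linarith

lemma measurePrepare_lt_povmBound {α : ℝ} (h1 : α < 1) :
    1 / 2 + √(1 + α ^ 2) / 4 < povmBound α := by
  set b := √((1 - α) ^ 2 + 4 * α ^ 2)
  have hb : b ^ 2 = (1 - α) ^ 2 + 4 * α ^ 2 := sq_sqrt (by positivity)
  have key : 2 * √(1 + α ^ 2) < (1 - α + b) * √2 := by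
    rw [← sq_lt_sq₀ (by positivity) (mul_nonneg (one_sub_add_sqrt_pos α).le (sqrt_nonneg 2)),
      mul_pow, mul_pow, sq_sqrt (by positivity), sq_sqrt zero_le_two]
    nlinarith [mul_lt_mul_of_pos_left (two_mul_lt_sqrt h1.ne) (sub_pos.2 h1)]
  rw [povmBound_eq]
  linarith

lemma pvmBound_le_povmBound {α : ℝ} (h1 : α ≤ 1) : pvmBound α ≤ povmBound α :=
  max_le (max_le (unitary_le_povmBound α) (mixed_lt_povmBound h1).le)
    (measurePrepare_le_povmBound h1)

lemma pvmBound_lt_povmBound {α : ℝ} (h0 : α ≠ 0) (h1 : α < 1) : pvmBound α < povmBound α :=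
  max_lt (max_lt (unitary_lt_povmBound h0) (mixed_lt_povmBound h1.le))
    (measurePrepare_lt_povmBound h1)

lemma povmBound_zero_le_pvmBound : povmBound 0 ≤ pvmBound 0 := by
  refine le_max_of_le_left (le_max_of_le_left ?_)
  rw [povmBound_eq, div_mul_sqrt_two]
  norm_num
  linarith

lemma povmBound_one_le_pvmBound : povmBound 1 ≤ pvmBound 1 := by
  refine le_max_of_le_right ?_
  rw [povmBound_eq]
  norm_num
  linarith

/-- For every `0 < α < 1` the unsharp-measurement value strictly exceeds the projective
bound, while at `α = 0` and `α = 1` the two quantities coincide. -/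
theorem povm_strictly_beats_pvm :
    (∀ α : ℝ, 0 < α → α < 1 → pvmBound α < povmBound α) ∧
      povmBound 0 = pvmBound 0 ∧ povmBound 1 = pvmBound 1 :=
  ⟨fun _ h0 h1 => pvmBound_lt_povmBound h0.ne' h1,
    povmBound_zero_le_pvmBound.antisymm (pvmBound_le_povmBound zero_le_one),
    povmBound_one_le_pvmBound.antisymm (pvmBound_le_povmBound le_rfl)⟩
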